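/- There exists a positive integer n₀ such that for all positive integers n ≥ n₀ and s ≤ n and every real p with 0 < p ≤ n^{−13/14}, the probability that the independence number of the random graph G(s,p) is at most A(s,n) = min(s/15, log² n) is at most n^{−3s}. -/

import Mathlib

open Filter MeasureTheory

namespace RandomCorr

/-- A correspondence assignment for a graph `G`: a list assignment `L` together with,
for each edge, a partial matching between the colors of its endpoints,
encoded as a symmetric relation `M` supported on edges of `G`. -/
structure CorrAssignment {V : Type} (G : SimpleGraph V) where
  L : V → Finset ℕ
  M : V → ℕ → V → ℕ → Prop
  symm : ∀ u i v j, M u i v j → M v j u i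
  adj_of : ∀ u i v j, M u i v j → G.Adj u v
  mem_left : ∀ u i v j, M u i v j → i ∈ L u
  mem_right : ∀ u i v j, M u i v j → j ∈ L v
  matching : ∀ u i v j j', M u i v j → M u i v j' → j = j'

variable {V : Type}

/-- An `(L,M)`-coloring. -/
def CorrAssignment.IsColoring {G : SimpleGraph V} (C : CorrAssignment G) (φ : V → ℕ) : Prop :=
  (∀ v, φ v ∈ C.L v) ∧ ∀ u v, ¬ C.M u (φ u) v (φ v)

/-- `(L,M)` is an `ℓ`-correspondence assignment. -/
def IsLAssignment {G : SimpleGraph V} (C : CorrAssignment G) (ℓ : ℕ) : Prop :=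
  ∀ v, ℓ ≤ (C.L v).card

/-- The correspondence chromatic number of `G` is at most `ℓ`. -/
def corrChromAtMost (G : SimpleGraph V) (ℓ : ℕ) : Prop :=
  ∀ C : CorrAssignment G, IsLAssignment C ℓ → ∃ φ, C.IsColoring φ

/-- Maximum degree of a finite graph. -/
noncomputable def maxDeg [Fintype V] (G : SimpleGraph V) : ℕ :=
  Finset.univ.sup fun v => (G.neighborSet v).ncard

/-- `binom(n, ≤ b) = ∑_{i=0}^{⌊b⌋} binom(n,i)`. -/
noncomputable def binomLe (n : ℕ) (b : ℝ) : ℕ :=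
  ∑ i ∈ Finset.range (⌊b⌋₊ + 1), n.choose i

/-- The number of independent sets (including the empty set) of a subgraph `F`. -/
noncomputable def subIndepCount {W : Type} {H : SimpleGraph W} (F : H.Subgraph) : ℕ :=
  {S : Set W | S ⊆ F.verts ∧ ∀ a ∈ S, ∀ b ∈ S, ¬ F.Adj a b}.ncard

/-- A neighborhood subgraph: a subgraph whose vertex set is contained in the
neighborhood of some vertex. -/
def IsNbrSubgraph {W : Type} {H : SimpleGraph W} (F : H.Subgraph) : Prop :=
  ∃ v, F.verts ⊆ H.neighborSet v

/-- `G` is `b`-IS-rich (with respect to maximum degree `Δ`): every `b`-large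
neighborhood subgraph `F` satisfies `I(F) ≥ 2 · binom(|V(F)|, ≤ b)`. -/
def ISRich (G : SimpleGraph V) (b : ℝ) (Δ : ℕ) : Prop :=
  ∀ F : G.Subgraph, IsNbrSubgraph F →
    (Δ : ℝ) ^ ((1 : ℝ)/3) < (binomLe F.verts.ncard b : ℝ) →
    2 * binomLe F.verts.ncard b ≤ subIndepCount F

/-- The cover graph of a correspondence assignment. -/
def coverGraph {G : SimpleGraph V} (C : CorrAssignment G) : SimpleGraph (V × ℕ) where
  Adj x y := C.M x.1 x.2 y.1 y.2
  symm := ⟨fun x y h => C.symm _ _ _ _ h⟩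
  loopless := ⟨fun x h => (G.loopless.irrefl x.1) (C.adj_of _ _ _ _ h)⟩

/-- A correspondence assignment is `b`-IS-rich (with respect to `Δ`) if every `b`-large
neighborhood subgraph of its cover graph has at least `2 · binom(|V(F)|, ≤ b)`
independent sets. -/
def CorrAssignment.ISRich {G : SimpleGraph V} (C : CorrAssignment G) (b : ℝ) (Δ : ℕ) : Prop :=
  ∀ F : (coverGraph C).Subgraph, IsNbrSubgraph F →
    (Δ : ℝ) ^ ((1 : ℝ)/3) < (binomLe F.verts.ncard b : ℝ) →
    2 * binomLe F.verts.ncard b ≤ subIndepCount F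

/-- Bernoulli measure on `Bool` with success probability `p` (truncated to `[0,1]`). -/
noncomputable def bern (p : ℝ) : Measure Bool :=
  (PMF.ofFintype (fun b => cond b (min (ENNReal.ofReal p) 1) (1 - min (ENNReal.ofReal p) 1))
    (by simp [add_tsub_cancel_of_le (min_le_right (ENNReal.ofReal p) 1)])).toMeasure

/-- The Erdős–Rényi measure: each potential edge appears independently with
probability `p`. -/
noncomputable def erdosRenyi (n : ℕ) (p : ℝ) : Measure (Sym2 (Fin n) → Bool) :=
  Measure.pi fun _ => bern p

/-- The graph determined by an edge-indicator function. -/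
def graphOf {n : ℕ} (ω : Sym2 (Fin n) → Bool) : SimpleGraph (Fin n) where
  Adj u v := u ≠ v ∧ ω s(u, v) = true
  symm := by
    constructor
    intro u v h
    refine ⟨h.1.symm, ?_⟩
    rw [Sym2.eq_swap]
    exact h.2
  loopless := ⟨fun u h => h.1 rfl⟩

/-- `G` has a complete minor of order `k`. -/
def HasCompleteMinor (G : SimpleGraph V) (k : ℕ) : Prop :=
  ∃ B : Fin k → Set V,
    (∀ i, (B i).Nonempty) ∧
    (∀ i, (G.induce (B i)).Connected) ∧
    (∀ i j, i ≠ j → Disjoint (B i) (B j)) ∧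
    (∀ i j, i ≠ j → ∃ u ∈ B i, ∃ v ∈ B j, G.Adj u v)

/-- The Hadwiger number: the largest `k` such that `K_k` is a minor of `G`. -/
noncomputable def hadwigerNumber [Fintype V] (G : SimpleGraph V) : ℕ :=
  sSup {k | HasCompleteMinor G k}

/-- Independence number. -/
noncomputable def indepNum [Fintype V] (G : SimpleGraph V) : ℕ :=
  sSup {k | ∃ S : Finset V, S.card = k ∧ ∀ a ∈ S, ∀ b ∈ S, ¬ G.Adj a b}

/-- A partial `(L,M)`-coloring. -/
def IsPartialColoring {G : SimpleGraph V} (C : CorrAssignment G) (φ : V → Option ℕ) : Prop :=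
  (∀ v c, φ v = some c → c ∈ C.L v) ∧
  ∀ u v cu cv, φ u = some cu → φ v = some cv → ¬ C.M u cu v cv

/-- The number of colors available at `u` with respect to a partial coloring `φ`. -/
noncomputable def availCount {G : SimpleGraph V} (C : CorrAssignment G)
    (φ : V → Option ℕ) (u : V) : ℕ :=
  {c : ℕ | c ∈ C.L u ∧ ∀ v cv, φ v = some cv → ¬ C.M u c v cv}.ncard

/-- The event `A_u`: `u` is uncolored and fewer than `Δ^{7/12}` colors are available
at `u`. -/
def EventA {G : SimpleGraph V} (C : CorrAssignment G) (Δ : ℕ) (u : V)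
    (φ : V → Option ℕ) : Prop :=
  φ u = none ∧ (availCount C φ u : ℝ) < (Δ : ℝ) ^ ((7 : ℝ)/12)

/-- The number of independent sets of `F` of size at least `m`. -/
noncomputable def indepGeCount {W : Type} {H : SimpleGraph W} (F : H.Subgraph) (m : ℕ) : ℕ :=
  {S : Set W | S ⊆ F.verts ∧ (∀ a ∈ S, ∀ b ∈ S, ¬ F.Adj a b) ∧ m ≤ S.ncard}.ncard

/-- The median size `ᾱ(F)` of an independent set: the largest `m` such that at least
half of the independent sets of `F` have size at least `m`. -/
noncomputable def medianIndep {W : Type} {H : SimpleGraph W} (F : H.Subgraph) : ℕ :=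
  sSup {m : ℕ | subIndepCount F ≤ 2 * indepGeCount F m}

end RandomCorr

/-!
If `α(G) ≤ k`, Turán's theorem applied to the complement of `G` forces at least
`s (s - k) / (2k)` edges. Hence some fixed set of `m = ⌈s (s - k) / (2k)⌉` potential edges is
present, and the union bound over these sets gives probability at most
`C(N, m) p^m ≤ (e N p / m)^m ≤ (6 k p)^m`, where `N ≤ s²` is the number of coordinates.
For `k ≤ log² n` and `p ≤ n^{-13/14}` we have `6 k p ≤ n^{-1/2}`, and `m ≥ 7 s` because
`s ≥ 15 k`, so the bound is at most `n^{-3s}`.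
-/

open Finset

namespace SimpleGraph

variable {V : Type*} [Fintype V] (G : SimpleGraph V)

theorem cliqueFree_compl_indepNum_add_one : Gᶜ.CliqueFree (G.indepNum + 1) := fun t ht => by
  have := ((isClique_compl G).1 ht.isClique).card_le_indepNum
  rw [ht.card_eq] at this
  omega

theorem indepNum_pos [Nonempty V] : 0 < G.indepNum := by
  obtain ⟨v⟩ := ‹Nonempty V›
  have : G.IsIndepSet ({v} : Finset V) := by simp [IsIndepSet]
  exact this.card_le_indepNum

variable [DecidableRel G.Adj]

theorem card_edgeFinset_add_card_edgeFinset_compl [DecidableEq V] :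
    #G.edgeFinset + #Gᶜ.edgeFinset = (Fintype.card V).choose 2 := by
  rw [← card_edgeFinset_top_eq_card_choose_two,
    ← card_union_of_disjoint (disjoint_edgeFinset.2 disjoint_compl_right)]
  congr 1
  ext e
  refine Sym2.ind (fun x y => ?_) e
  have := G.ne_of_adj (a := x) (b := y)
  simp only [mem_union, mem_edgeFinset, mem_edgeSet, compl_adj, top_adj]
  tauto

variable {G} in
theorem CliqueFree.two_mul_mul_card_edgeFinset_le {r : ℕ} (h : G.CliqueFree (r + 1)) :
    2 * r * #G.edgeFinset ≤ (r - 1) * Fintype.card V ^ 2 := by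
  rcases r.eq_zero_or_pos with rfl | hr
  · simp
  obtain ⟨H, _, hH⟩ := exists_isTuranMaximal (V := V) hr
  calc 2 * r * #G.edgeFinset ≤ 2 * r * #(turanGraph (Fintype.card V) r).edgeFinset := by
        rw [((isTuranMaximal_iff_nonempty_iso_turanGraph hr).mp hH).some.card_edgeFinset_eq.symm]
        exact Nat.mul_le_mul_left _ (hH.2 h)
    _ ≤ (r - 1) * Fintype.card V ^ 2 := mul_card_edgeFinset_turanGraph_le

theorem card_sq_le_indepNum_mul :
    Fintype.card V ^ 2 ≤ G.indepNum * (2 * #G.edgeFinset + Fintype.card V) := by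
  classical
  cases isEmpty_or_nonempty V
  · simp
  have hk := G.indepNum_pos
  have hcompl := G.cliqueFree_compl_indepNum_add_one.two_mul_mul_card_edgeFinset_le
  have hsum := G.card_edgeFinset_add_card_edgeFinset_compl
  rw [← Nat.cast_le (α := ℝ)] at hcompl ⊢
  apply_fun ((↑) : ℕ → ℝ) at hsum
  push_cast [Nat.cast_sub hk, Nat.cast_choose_two] at hcompl hsum ⊢
  nlinarith

end SimpleGraph

theorem Nat.cast_choose_mul_pow_le (N m : ℕ) {x : ℝ} (hx : 0 ≤ x) :
    (N.choose m : ℝ) * x ^ m ≤ (Real.exp 1 * N * x / m) ^ m := by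
  rcases m.eq_zero_or_pos with rfl | hm
  · simp
  have hfact : (m : ℝ) ^ m / m.factorial ≤ Real.exp 1 ^ m := by
    simpa [← Real.exp_nat_mul] using Real.pow_div_factorial_le_exp _ (Nat.cast_nonneg m) m
  calc (N.choose m : ℝ) * x ^ m ≤ N ^ m / m.factorial * x ^ m := by
        gcongr; exact Nat.choose_le_pow_div m N
    _ = (m : ℝ) ^ m / m.factorial * ((N * x / m) ^ m) := by
        have : (m : ℝ) ≠ 0 := by positivity
        rw [div_pow, mul_pow]; field_simp
    _ ≤ Real.exp 1 ^ m * ((N * x / m) ^ m) := by gcongr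
    _ = (Real.exp 1 * N * x / m) ^ m := by rw [← mul_pow]; ring_nf

noncomputable def turanEdgeBound (s k : ℕ) : ℕ := ⌈(s : ℝ) * (s - k) / (2 * k)⌉₊

section TuranEdgeBound

variable {s k : ℕ}

theorem seven_mul_le_turanEdgeBound (hk : 0 < k) (hks : 15 * k ≤ s) :
    7 * s ≤ turanEdgeBound s k := by
  have hks' : 15 * (k : ℝ) ≤ s := by exact_mod_cast hks
  have hk' : (0 : ℝ) < k := by exact_mod_cast hk
  refine Nat.cast_le.1 (le_trans ?_ (Nat.le_ceil _))
  rw [le_div_iff₀ (by linarith)]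
  push_cast
  nlinarith

theorem exp_one_mul_card_sym2_le (hk : 0 < k) (hks : 15 * k ≤ s) :
    Real.exp 1 * Fintype.card (Sym2 (Fin s)) ≤ 6 * k * turanEdgeBound s k := by
  have hks' : 15 * (k : ℝ) ≤ s := by exact_mod_cast hks
  have hk' : (1 : ℝ) ≤ k := by exact_mod_cast hk
  have hceil : (s : ℝ) * (s - k) ≤ 2 * k * turanEdgeBound s k :=
    (div_le_iff₀' (by linarith)).1 (Nat.le_ceil _)
  have hsq : 14 / 5 * (s : ℝ) ^ 2 ≤ 6 * k * turanEdgeBound s k := by nlinarith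
  have he : Real.exp 1 ≤ 2.72 := Real.exp_one_lt_d9.le.trans (by norm_num)
  rw [Sym2.card, Fintype.card_fin, Nat.cast_choose_two]
  push_cast
  nlinarith

theorem choose_card_sym2_mul_pow_le (hk : 0 < k) (hks : 15 * k ≤ s) {x : ℝ} (hx : 0 ≤ x) :
    ((Fintype.card (Sym2 (Fin s))).choose (turanEdgeBound s k) : ℝ) * x ^ turanEdgeBound s k ≤
      (6 * k * x) ^ turanEdgeBound s k := by
  have hm : (0 : ℝ) < turanEdgeBound s k := by
    have := seven_mul_le_turanEdgeBound hk hks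
    exact_mod_cast (by omega : 0 < turanEdgeBound s k)
  refine (Nat.cast_choose_mul_pow_le _ _ hx).trans (pow_le_pow_left₀ (by positivity) ?_ _)
  rw [div_le_iff₀ hm]
  linarith [mul_le_mul_of_nonneg_right (exp_one_mul_card_sym2_le hk hks) hx]

end TuranEdgeBound

theorem six_mul_log_sq_mul_rpow_le {n : ℝ} (hn : 2 ^ 70 ≤ n) :
    6 * Real.log n ^ 2 * n ^ (-(13 : ℝ) / 14) ≤ n ^ (-(1 : ℝ) / 2) := by
  have hn0 : 0 < n := lt_of_lt_of_le (by positivity) hn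
  have hlog : Real.log n ≤ 28 * n ^ ((1 : ℝ) / 28) := by
    have := Real.log_le_rpow_div hn0.le (by norm_num : (0 : ℝ) < 1 / 28)
    linarith
  have hsq : Real.log n ^ 2 ≤ 784 * n ^ ((1 : ℝ) / 14) := by
    calc Real.log n ^ 2 ≤ (28 * n ^ ((1 : ℝ) / 28)) ^ 2 :=
          pow_le_pow_left₀ (Real.log_nonneg (by linarith)) hlog 2
      _ = 784 * n ^ ((1 : ℝ) / 14) := by
          rw [mul_pow, ← Real.rpow_natCast (n ^ _), ← Real.rpow_mul hn0.le]
          norm_num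
  have hbig : (4704 : ℝ) ≤ n ^ ((5 : ℝ) / 14) := by
    calc (4704 : ℝ) ≤ ((2 : ℝ) ^ (70 : ℝ)) ^ ((5 : ℝ) / 14) := by
          rw [← Real.rpow_mul (by norm_num)]
          norm_num
      _ ≤ n ^ ((5 : ℝ) / 14) :=
          Real.rpow_le_rpow (by positivity) (by exact_mod_cast hn) (by norm_num)
  calc 6 * Real.log n ^ 2 * n ^ (-(13 : ℝ) / 14)
      ≤ 6 * (784 * n ^ ((1 : ℝ) / 14)) * n ^ (-(13 : ℝ) / 14) := by gcongr
    _ = 4704 * n ^ (-(6 : ℝ) / 7) := by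
        rw [mul_assoc, mul_assoc, ← Real.rpow_add hn0, ← mul_assoc]
        norm_num
    _ ≤ n ^ ((5 : ℝ) / 14) * n ^ (-(6 : ℝ) / 7) := by gcongr
    _ = n ^ (-(1 : ℝ) / 2) := by
        rw [← Real.rpow_add hn0]
        norm_num

namespace RandomCorr

variable {p : ℝ}

theorem indepNum_eq {V : Type} [Fintype V] (G : SimpleGraph V) : indepNum G = G.indepNum := by
  unfold indepNum SimpleGraph.indepNum
  congr 1
  ext k
  refine exists_congr fun S => ?_
  rw [SimpleGraph.isNIndepSet_iff, SimpleGraph.isIndepSet_iff, and_comm]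
  refine and_congr_left fun _ => ⟨fun h a ha b hb _ => h a ha b hb, fun h a ha b hb hab => ?_⟩
  exact h ha hb (G.ne_of_adj hab) hab

theorem bern_singleton_true (hp : p ≤ 1) : bern p {true} = ENNReal.ofReal p := by
  rw [bern, PMF.toMeasure_apply_singleton _ _ (measurableSet_singleton _)]
  simp [PMF.ofFintype_apply, ENNReal.ofReal_le_one.2 hp]

instance isProbabilityMeasure_bern : IsProbabilityMeasure (bern p) :=
  PMF.toMeasure.isProbabilityMeasure _

section Product

variable {ι : Type*} [Fintype ι]

theorem pi_bern_forall_mem_eq_true (hp : p ≤ 1) (E : Finset ι) :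
    Measure.pi (fun _ : ι => bern p) {ω | ∀ i ∈ E, ω i = true} = ENNReal.ofReal p ^ #E := by
  classical
  have hpi : {ω : ι → Bool | ∀ i ∈ E, ω i = true} =
      Set.univ.pi fun i => if i ∈ E then {true} else Set.univ := by
    ext ω
    simp only [Set.mem_ofPred_eq, Set.mem_pi, Set.mem_univ, true_implies]
    refine forall_congr' fun i => ?_
    split_ifs <;> simp [*]
  simp only [hpi, Measure.pi_pi, apply_ite, bern_singleton_true hp, measure_univ]
  rw [prod_ite_mem, univ_inter, prod_const]

theorem pi_bern_le_card_filter_le (hp : p ≤ 1) (m : ℕ) :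
    Measure.pi (fun _ : ι => bern p) {ω | m ≤ #{i | ω i = true}} ≤
      (Fintype.card ι).choose m * ENNReal.ofReal p ^ m := by
  classical
  have hcover : {ω : ι → Bool | m ≤ #{i | ω i = true}} ⊆
      ⋃ E ∈ powersetCard m univ, {ω | ∀ i ∈ E, ω i = true} := by
    intro ω hω
    obtain ⟨E, hE, hEm⟩ := exists_subset_card_eq hω
    refine Set.mem_biUnion (mem_powersetCard.2 ⟨subset_univ E, hEm⟩) fun i hi => ?_
    simpa using hE hi
  calc _ ≤ ∑ E ∈ powersetCard m univ,
        Measure.pi (fun _ : ι => bern p) {ω | ∀ i ∈ E, ω i = true} :=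
        (measure_mono hcover).trans (measure_biUnion_finset_le _ _)
    _ = (Fintype.card ι).choose m * ENNReal.ofReal p ^ m := by
        rw [Finset.sum_congr rfl fun E hE => by
            rw [pi_bern_forall_mem_eq_true hp, (mem_powersetCard.1 hE).2],
          sum_const, card_powersetCard, card_univ, nsmul_eq_mul]

end Product

theorem card_edgeFinset_graphOf_le {n : ℕ} (ω : Sym2 (Fin n) → Bool)
    [DecidableRel (graphOf ω).Adj] : #(graphOf ω).edgeFinset ≤ #{e | ω e = true} := by
  refine card_le_card fun e he => ?_
  rw [SimpleGraph.mem_edgeFinset] at he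
  induction e using Sym2.ind
  simpa using he.2

theorem erdosRenyi_indepNum_le_le (hp : p ≤ 1) (s k : ℕ) :
    erdosRenyi s p {ω | (graphOf ω).indepNum ≤ k} ≤
      (Fintype.card (Sym2 (Fin s))).choose (turanEdgeBound s k) *
        ENNReal.ofReal p ^ turanEdgeBound s k := by
  classical
  refine (measure_mono fun ω (hω : _ ≤ k) => ?_).trans (pi_bern_le_card_filter_le hp _)
  have hturan := ((graphOf ω).card_sq_le_indepNum_mul).trans (Nat.mul_le_mul_right _ hω)
  refine (Nat.ceil_le.2 ?_).trans (card_edgeFinset_graphOf_le ω)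
  rw [Fintype.card_fin, ← Nat.cast_le (α := ℝ)] at hturan
  push_cast at hturan
  rcases k.eq_zero_or_pos with rfl | hk
  · simp
  rw [div_le_iff₀ (by positivity)]
  linarith

theorem erdosRenyi_indepNum_le_le_rpow {n s k : ℕ} (hn : (2 : ℝ) ^ 70 ≤ n) (hk : 0 < k)
    (hks : 15 * k ≤ s) (hklog : (k : ℝ) ≤ Real.log n ^ 2) (hp : 0 ≤ p)
    (hpn : p ≤ (n : ℝ) ^ (-(13 : ℝ) / 14)) :
    erdosRenyi s p {ω | (graphOf ω).indepNum ≤ k} ≤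
      ENNReal.ofReal ((n : ℝ) ^ (-(3 * s : ℝ))) := by
  have hn1 : (1 : ℝ) ≤ n := le_trans (by norm_num) hn
  have hp1 : p ≤ 1 := hpn.trans (Real.rpow_le_one_of_one_le_of_nonpos hn1 (by norm_num))
  have hm : 7 * (s : ℝ) ≤ turanEdgeBound s k := by
    exact_mod_cast seven_mul_le_turanEdgeBound hk hks
  refine (erdosRenyi_indepNum_le_le hp1 s k).trans ?_
  rw [← ENNReal.ofReal_natCast, ← ENNReal.ofReal_pow hp, ← ENNReal.ofReal_mul (by positivity)]
  refine ENNReal.ofReal_le_ofReal ?_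
  have hkp : 6 * k * p ≤ 6 * Real.log n ^ 2 * (n : ℝ) ^ (-(13 : ℝ) / 14) := by gcongr
  calc _ ≤ (6 * k * p) ^ turanEdgeBound s k := choose_card_sym2_mul_pow_le hk hks hp
    _ ≤ ((n : ℝ) ^ (-(1 : ℝ) / 2)) ^ turanEdgeBound s k :=
        pow_le_pow_left₀ (by positivity) (hkp.trans (six_mul_log_sq_mul_rpow_le hn)) _
    _ = (n : ℝ) ^ (-(1 : ℝ) / 2 * turanEdgeBound s k) := by
        rw [← Real.rpow_natCast, ← Real.rpow_mul (by positivity)]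
    _ ≤ (n : ℝ) ^ (-(3 * s : ℝ)) := Real.rpow_le_rpow_of_exponent_le hn1 (by linarith)

end RandomCorr

/-- There is `n₀ > 0` such that for all `n ≥ n₀`, `0 < s ≤ n` and
`0 < p ≤ n^{-13/14}`, the probability that `α(G(s,p)) ≤ min(s/15, log² n)` is at most
`n^{-3s}`. -/
theorem independence_number_of_sparse_random_graph :
    ∃ n₀ : ℕ, 0 < n₀ ∧ ∀ n : ℕ, n₀ ≤ n → ∀ s : ℕ, 0 < s → s ≤ n →
      ∀ p : ℝ, 0 < p → p ≤ (n : ℝ) ^ (-(13 : ℝ)/14) →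
      RandomCorr.erdosRenyi s p
        {ω | (RandomCorr.indepNum (RandomCorr.graphOf ω) : ℝ) ≤
          min ((s : ℝ)/15) ((Real.log n) ^ 2)} ≤
      ENNReal.ofReal ((n : ℝ) ^ (-(3 * s : ℝ))) := by
  refine ⟨2 ^ 70, by positivity, fun n hn s hs _ p hp hpn => ?_⟩
  set a := min ((s : ℝ) / 15) (Real.log n ^ 2)
  have ha : 0 ≤ a := by positivity
  have hevent :
      {ω : Sym2 (Fin s) → Bool | (RandomCorr.indepNum (RandomCorr.graphOf ω) : ℝ) ≤ a} =
        {ω | (RandomCorr.graphOf ω).indepNum ≤ ⌊a⌋₊} := by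
    ext ω
    simp only [Set.mem_ofPred_eq, Nat.le_floor_iff ha, RandomCorr.indepNum_eq]
  rw [hevent]
  rcases (⌊a⌋₊).eq_zero_or_pos with hk | hk
  · have : Nonempty (Fin s) := ⟨⟨0, hs⟩⟩
    simp [hk, Nat.pos_iff_ne_zero.1 (SimpleGraph.indepNum_pos _)]
  have hks : 15 * (⌊a⌋₊ : ℝ) ≤ s := by
    linarith [(Nat.floor_le ha).trans (min_le_left _ _)]
  exact RandomCorr.erdosRenyi_indepNum_le_le_rpow (by exact_mod_cast hn) hk
    (by exact_mod_cast hks) ((Nat.floor_le ha).trans (min_le_right _ _)) hp.le hpn
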